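/- (Non-minimality of iteratively expanded solutions.) Consider atoms a, b, c, p, background B = ∅, hypothesis space L consisting of all rules with head a, positive body a subset of {b, c, p}, and empty negative body, and the three examples E_1 = ({p., b., c.}, {a}, ∅), E_2 = ({b.}, ∅, {a}), E_3 = ({c.}, {a}, ∅). Then: (i) {a ← p.} and {a ← c.} are both minimal solutions of the task with examples ⟨E_1, E_2⟩; (ii) {a ← p., a ← c.} is a solution of the task with examples ⟨E_1, E_2, E_3⟩; but (iii) {a ← p., a ← c.} is not a minimal solution of that task, since {a ← c.} is also a solution and {a ← c.} < {a ← p., a ← c.}. -/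

import Mathlib

namespace ASP

/-- A ground normal rule: a head atom, a finite set of positive body atoms,
and a finite set of negated body atoms. -/
structure Rule (α : Type) where
  head : α
  pos : Finset α
  neg : Finset α
deriving DecidableEq

variable {α : Type}

/-- An interpretation `M` satisfies a rule `r` if `head r ∈ M` whenever
`pos r ⊆ M` and `neg r ∩ M = ∅`. -/
def ruleSat (M : Set α) (r : Rule α) : Prop :=
  ((↑r.pos : Set α) ⊆ M ∧ ∀ a ∈ r.neg, a ∉ M) → r.head ∈ M

/-- `M` is a model of a program if it satisfies every rule. -/
def isModel (M : Set α) (P : Set (Rule α)) : Prop :=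
  ∀ r ∈ P, ruleSat M r

/-- A definite program has no negated body atoms. -/
def isDefinite (P : Set (Rule α)) : Prop :=
  ∀ r ∈ P, r.neg = ∅

/-- The reduct `P^M`: the definite program
`{(head r, pos r, ∅) : r ∈ P, neg r ∩ M = ∅}`. -/
def reduct (P : Set (Rule α)) (M : Set α) : Set (Rule α) :=
  {r' | ∃ r ∈ P, (∀ a ∈ r.neg, a ∉ M) ∧ r' = ⟨r.head, r.pos, ∅⟩}

/-- `M` is the least model of `P`: a model contained in every model of `P`. -/
def isLeastModel (M : Set α) (P : Set (Rule α)) : Prop :=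
  isModel M P ∧ ∀ M', isModel M' P → M ⊆ M'

/-- `M` is a stable model (answer set) of `P` if `M` is the least model of
the reduct `P^M`. -/
def isStable (M : Set α) (P : Set (Rule α)) : Prop :=
  isLeastModel M (reduct P M)

/-- A program is stratified if there is a stratification function `s` on atoms. -/
def isStratified (P : Set (Rule α)) : Prop :=
  ∃ s : α → ℕ, ∀ r ∈ P,
    (∀ a ∈ r.pos, s a ≤ s r.head) ∧ (∀ a ∈ r.neg, s a < s r.head)

/-- `P ⊢ a` : atom `a` belongs to every stable model of `P`. -/
def entails (P : Set (Rule α)) (a : α) : Prop :=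
  ∀ M, isStable M P → a ∈ M

/-- `H1 ≤ H2` for finite ground programs: there is an injective map `f` from the
rules of `H1` to the rules of `H2` preserving heads and (weakly) enlarging bodies. -/
def progLE (H1 H2 : Finset (Rule α)) : Prop :=
  ∃ f : Rule α → Rule α, Set.InjOn f ↑H1 ∧
    ∀ r ∈ H1, f r ∈ H2 ∧ (f r).head = r.head ∧ r.pos ⊆ (f r).pos ∧ r.neg ⊆ (f r).neg

/-- `H1 < H2` iff `H1 ≤ H2` and `H1 ≠ H2`. -/
def progLT (H1 H2 : Finset (Rule α)) : Prop :=
  progLE H1 H2 ∧ H1 ≠ H2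

/-- A context-dependent example: an observation program `obs` together with finite
sets of positive and negative example atoms. -/
structure ILPExample (α : Type) where
  obs : Set (Rule α)
  epos : Finset α
  eneg : Finset α

/-- `H` covers example `E` (relative to background `B`): every positive example atom
belongs to every stable model of `B ∪ O ∪ H`, and no negative example atom does. -/
def covers (B : Set (Rule α)) (H : Finset (Rule α)) (E : ILPExample α) : Prop :=
  (∀ a ∈ E.epos, entails (B ∪ E.obs ∪ ↑H) a) ∧
  (∀ a ∈ E.eneg, ¬ entails (B ∪ E.obs ∪ ↑H) a)

/-- `H` is a solution of the ILP task for distinct examples `(B, L, Es)`. -/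
def isSolution (B L : Set (Rule α)) (Es : List (ILPExample α))
    (H : Finset (Rule α)) : Prop :=
  (↑H : Set (Rule α)) ⊆ L ∧ ∀ E ∈ Es, covers B H E

/-- A solution `H` is minimal if no solution `H'` satisfies `H' < H`. -/
def isMinimalSolution (B L : Set (Rule α)) (Es : List (ILPExample α))
    (H : Finset (Rule α)) : Prop :=
  isSolution B L Es H ∧ ¬∃ H', isSolution B L Es H' ∧ progLT H' H

inductive Atom : Type
  | a | b | c | p
deriving DecidableEq

/-- A fact: a rule with the given head and empty body. -/
def fact (x : Atom) : Rule Atom := ⟨x, ∅, ∅⟩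

/-- The rule `a ← p.` -/
def ruleAP : Rule Atom := ⟨Atom.a, {Atom.p}, ∅⟩

/-- The rule `a ← c.` -/
def ruleAC : Rule Atom := ⟨Atom.a, {Atom.c}, ∅⟩

/-- Hypothesis space: all rules with head `a`, positive body a subset of
`{b, c, p}`, and empty negative body. -/
def Lspace : Set (Rule Atom) :=
  {r | r.head = Atom.a ∧ r.pos ⊆ ({Atom.b, Atom.c, Atom.p} : Finset Atom) ∧ r.neg = ∅}

def Ex1 : ILPExample Atom := ⟨{fact Atom.p, fact Atom.b, fact Atom.c}, {Atom.a}, ∅⟩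
def Ex2 : ILPExample Atom := ⟨{fact Atom.b}, ∅, {Atom.a}⟩
def Ex3 : ILPExample Atom := ⟨{fact Atom.c}, {Atom.a}, ∅⟩


/-!
Every program occurring here is definite, so its only stable model is its least model,
which can be read off directly. In the example `E_2` the least model is `{b}` as soon as
each rule of the hypothesis needs some atom other than `b`, so `a` is not entailed; in
`E_1` and `E_3` the rule `a ← c.` (or `a ← p.`) fires on the observed fact. A hypothesis
strictly below a one-rule program `{a ← x.}` is either empty, which fails `E_1`, or the
fact `a.`, which fails `E_2`; hence both `{a ← p.}` and `{a ← c.}` are minimal for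
`⟨E_1, E_2⟩`. Adding `E_3` keeps `{a ← c.}` a solution, and it lies strictly below
`{a ← p., a ← c.}`.
-/

theorem reduct_eq_self_of_isDefinite {P : Set (Rule α)} (hP : isDefinite P) (M : Set α) :
    reduct P M = P := by
  refine Set.Subset.antisymm ?_ fun r hr => ?_
  · rintro _ ⟨⟨hd, ps, ns⟩, hr, -, rfl⟩
    obtain rfl : ns = ∅ := hP _ hr
    exact hr
  · obtain ⟨hd, ps, ns⟩ := r
    obtain rfl : ns = ∅ := hP _ hr
    exact ⟨_, hr, by simp, rfl⟩

theorem head_mem_of_isStable {P : Set (Rule α)} {M : Set α} (hM : isStable M P)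
    {r : Rule α} (hr : r ∈ P) (hneg : ∀ a ∈ r.neg, a ∉ M) (hpos : (↑r.pos : Set α) ⊆ M) :
    r.head ∈ M :=
  hM.1 ⟨r.head, r.pos, ∅⟩ ⟨r, hr, hneg, rfl⟩ ⟨hpos, by simp⟩

theorem entails_of_mem_of_mem {P : Set (Rule α)} {x y : α} (hx : ⟨x, ∅, ∅⟩ ∈ P)
    (hxy : ⟨y, {x}, ∅⟩ ∈ P) : entails P y := by
  intro M hM
  have hxM : x ∈ M := head_mem_of_isStable hM hx (by simp) (by simp)
  exact head_mem_of_isStable hM hxy (by simp) (by simpa using hxM)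

theorem isStable_of_isModel_of_facts {P : Set (Rule α)} {M : Set α} (hP : isDefinite P)
    (hmodel : isModel M P) (hfacts : ∀ x ∈ M, ⟨x, ∅, ∅⟩ ∈ P) : isStable M P := by
  rw [isStable, reduct_eq_self_of_isDefinite hP]
  exact ⟨hmodel, fun M' hM' x hx => hM' _ (hfacts x hx) ⟨by simp, by simp⟩⟩

theorem card_le_card_of_progLE {H₁ H₂ : Finset (Rule α)} (h : progLE H₁ H₂) :
    H₁.card ≤ H₂.card := by
  obtain ⟨f, hinj, hf⟩ := h
  exact Finset.card_le_card_of_injOn f (fun r hr => (hf r hr).1) hinj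

theorem progLE_of_subset [DecidableEq α] {H₁ H₂ : Finset (Rule α)} (h : H₁ ⊆ H₂) :
    progLE H₁ H₂ :=
  ⟨id, Set.injOn_id _, fun _ hr => ⟨h hr, rfl, subset_rfl, subset_rfl⟩⟩

theorem progLT_of_ssubset [DecidableEq α] {H₁ H₂ : Finset (Rule α)} (h : H₁ ⊂ H₂) :
    progLT H₁ H₂ :=
  ⟨progLE_of_subset h.subset, h.ne⟩

theorem eq_empty_or_eq_singleton_of_progLE_singleton {H : Finset (Rule α)} {r : Rule α}
    (h : progLE H {r}) :
    H = ∅ ∨ ∃ s, H = {s} ∧ s.head = r.head ∧ s.pos ⊆ r.pos ∧ s.neg ⊆ r.neg := by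
  rcases H.eq_empty_or_nonempty with rfl | ⟨s, hs⟩
  · exact Or.inl rfl
  have hcard : H.card ≤ 1 := card_le_card_of_progLE h
  obtain rfl : H = {s} :=
    Finset.eq_singleton_iff_unique_mem.2 ⟨hs, fun t ht => Finset.card_le_one.1 hcard t ht s hs⟩
  obtain ⟨f, -, hf⟩ := h
  obtain ⟨hfs, hhead, hpos, hneg⟩ := hf s hs
  rw [Finset.mem_singleton.1 hfs] at hhead hpos hneg
  exact Or.inr ⟨s, rfl, hhead.symm, hpos, hneg⟩

theorem covers_ex1 {H : Finset (Rule Atom)} {x : Atom} (hx : x ≠ Atom.a)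
    (hH : ⟨Atom.a, {x}, ∅⟩ ∈ H) : covers ∅ H Ex1 := by
  refine ⟨?_, by simp [Ex1]⟩
  simp only [Ex1, Finset.mem_singleton, forall_eq]
  refine entails_of_mem_of_mem (x := x) ?_ (Or.inr hH)
  cases x <;> simp [fact] at hx ⊢

theorem covers_ex3 {H : Finset (Rule Atom)} (hH : ruleAC ∈ H) : covers ∅ H Ex3 := by
  refine ⟨?_, by simp [Ex3]⟩
  simp only [Ex3, Finset.mem_singleton, forall_eq]
  exact entails_of_mem_of_mem (x := Atom.c) (by simp [fact]) (Or.inr hH)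

/-- `{b}` stays the stable model of `{b.} ∪ H` when every rule of `H` needs an atom besides `b`. -/
theorem covers_ex2 {H : Finset (Rule Atom)}
    (hH : ∀ r ∈ H, r.neg = ∅ ∧ ¬ r.pos ⊆ {Atom.b}) : covers ∅ H Ex2 := by
  refine ⟨by simp [Ex2], ?_⟩
  simp only [Ex2, Finset.mem_singleton, forall_eq]
  have hstable : isStable {Atom.b} (∅ ∪ Ex2.obs ∪ ↑H) := by
    rw [Set.empty_union]
    apply isStable_of_isModel_of_facts
    · rintro r (rfl | hr)
      · rfl
      · exact (hH r hr).1
    · rintro r (rfl | hr) ⟨hpos, -⟩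
      · rfl
      · exact absurd (by exact_mod_cast hpos) (hH r hr).2
    · simp [Ex2, fact]
  exact fun h => by simpa using h _ hstable

theorem not_covers_ex1_empty : ¬ covers ∅ ∅ Ex1 := by
  rintro ⟨hpos, -⟩
  have hstable : isStable {Atom.p, Atom.b, Atom.c} (∅ ∪ Ex1.obs ∪ ↑(∅ : Finset (Rule Atom))) := by
    apply isStable_of_isModel_of_facts
    · simp [Ex1, fact, isDefinite]
    · simp [Ex1, fact, isModel, ruleSat]
    · simp [Ex1, fact]
  simpa using hpos Atom.a (by simp [Ex1]) _ hstable

theorem not_covers_ex2_fact_a : ¬ covers ∅ {fact Atom.a} Ex2 := by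
  rintro ⟨-, hneg⟩
  exact hneg Atom.a (by simp [Ex2])
    fun M hM => head_mem_of_isStable (r := fact Atom.a) hM (by simp) (by simp [fact]) (by simp [fact])

theorem isMinimalSolution_ex12 {x : Atom} (hxa : x ≠ Atom.a) (hxb : x ≠ Atom.b) :
    isMinimalSolution ∅ Lspace [Ex1, Ex2] {⟨Atom.a, {x}, ∅⟩} := by
  refine ⟨⟨?_, ?_⟩, ?_⟩
  · cases x <;> simp_all [Lspace]
  · simp only [List.mem_cons, List.not_mem_nil, or_false, forall_eq_or_imp, forall_eq]
    exact ⟨covers_ex1 hxa (by simp), covers_ex2 (by simpa using hxb)⟩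
  · rintro ⟨H, ⟨-, hcov⟩, hle, hne⟩
    have hcov1 := hcov Ex1 (by simp)
    have hcov2 := hcov Ex2 (by simp)
    rcases eq_empty_or_eq_singleton_of_progLE_singleton hle with
      rfl | ⟨⟨hd, ps, ns⟩, rfl, hhead, hpos, hneg⟩
    · exact not_covers_ex1_empty hcov1
    obtain rfl : ns = ∅ := Finset.subset_empty.1 hneg
    dsimp only at hhead hpos
    subst hhead
    rcases Finset.subset_singleton_iff.1 hpos with rfl | rfl
    · exact not_covers_ex2_fact_a hcov2
    · exact hne rfl

/-- (i) `{a ← p.}` and `{a ← c.}` are both minimal solutions of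
the task with examples `⟨E_1, E_2⟩`; (ii) `{a ← p., a ← c.}` is a solution of
the task with examples `⟨E_1, E_2, E_3⟩`; (iii) it is not a minimal solution of
that task, since `{a ← c.}` is also a solution and `{a ← c.} < {a ← p., a ← c.}`. -/
theorem iterative_expansion_not_minimal :
    (isMinimalSolution (∅ : Set (Rule Atom)) Lspace [Ex1, Ex2] {ruleAP} ∧
     isMinimalSolution (∅ : Set (Rule Atom)) Lspace [Ex1, Ex2] {ruleAC}) ∧
    isSolution (∅ : Set (Rule Atom)) Lspace [Ex1, Ex2, Ex3] {ruleAP, ruleAC} ∧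
    (¬ isMinimalSolution (∅ : Set (Rule Atom)) Lspace [Ex1, Ex2, Ex3] {ruleAP, ruleAC} ∧
     isSolution (∅ : Set (Rule Atom)) Lspace [Ex1, Ex2, Ex3] {ruleAC} ∧
     progLT {ruleAC} ({ruleAP, ruleAC} : Finset (Rule Atom))) := by
  have hAC : isSolution ∅ Lspace [Ex1, Ex2, Ex3] {ruleAC} := by
    refine ⟨by simp [Lspace, ruleAC], ?_⟩
    simp only [List.mem_cons, List.not_mem_nil, or_false, forall_eq_or_imp, forall_eq]
    exact ⟨covers_ex1 (x := Atom.c) (by decide) (by simp [ruleAC]),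
      covers_ex2 (by simp [ruleAC]), covers_ex3 (by simp)⟩
  have hAPAC : isSolution ∅ Lspace [Ex1, Ex2, Ex3] {ruleAP, ruleAC} := by
    refine ⟨by simp [Set.insert_subset_iff, Lspace, ruleAP, ruleAC], ?_⟩
    simp only [List.mem_cons, List.not_mem_nil, or_false, forall_eq_or_imp, forall_eq]
    exact ⟨covers_ex1 (x := Atom.c) (by decide) (by simp [ruleAC]),
      covers_ex2 (by simp [ruleAP, ruleAC]), covers_ex3 (by simp)⟩
  have hlt : progLT {ruleAC} ({ruleAP, ruleAC} : Finset (Rule Atom)) :=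
    progLT_of_ssubset (by decide)
  exact ⟨⟨isMinimalSolution_ex12 (by decide) (by decide),
    isMinimalSolution_ex12 (by decide) (by decide)⟩,
    hAPAC, fun h => h.2 ⟨_, hAC, hlt⟩, hAC, hlt⟩

end ASP
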